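/- arXiv:1307.4781 — 3 statements merged into one kernel-verified Lean document; each statement's English description precedes it below -/
import Mathlib

section
/- There exists a constant C > 0 such that for all real ξ with |ξ| ≥ 1 and any fixed τ > 0, |∫_0^τ θ^{-1/2} e^{Ξ²(θ-τ)} dθ − 1/(√τ Ξ²)| ≤ C ξ^{-4}, where Ξ = σ₀ ξ / √2 for a fixed constant σ₀ > 0. -/
/-!
Write `a = Ξ²`. The weight `e^{a(θ-τ)}` concentrates at `θ = τ`, so compare `1/√θ` with
`1/√τ`: the main term is `∫₀^τ e^{a(θ-τ)}/√τ = (1 - e^{-aτ})/(a√τ)` with `e^{-aτ} = O(a⁻¹)`.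
The remainder `∫₀^τ e^{a(θ-τ)} (1/√θ - 1/√τ)` is nonnegative. On `[0, τ/2]` the weight is at
most `e^{-aτ/2} = O(a⁻²)` against the integrable `1/√θ`; on `[τ/2, τ]`,
`1/√θ - 1/√τ ≤ 2(τ-θ)/τ^{3/2}` and `∫ (τ-θ) e^{a(θ-τ)} ≤ a⁻²`. Hence the error is
`O(a⁻²) = O(ξ⁻⁴)`.
-/

open MeasureTheory Real Set

lemma one_div_sqrt_eq_rpow {θ : ℝ} (hθ : 0 ≤ θ) : 1 / √θ = θ ^ (-(1 / 2) : ℝ) := by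
  rw [sqrt_eq_rpow, rpow_neg hθ, one_div]

lemma intervalIntegrable_one_div_sqrt {b : ℝ} (hb : 0 ≤ b) :
    IntervalIntegrable (fun θ => 1 / √θ) volume 0 b :=
  (intervalIntegral.intervalIntegrable_rpow' (by norm_num)).congr fun θ hθ =>
    (one_div_sqrt_eq_rpow (uIoc_of_le hb ▸ hθ).1.le).symm

lemma integral_one_div_sqrt {b : ℝ} (hb : 0 ≤ b) : ∫ θ in 0..b, 1 / √θ = 2 * √b := by
  rw [intervalIntegral.integral_congr fun θ hθ => one_div_sqrt_eq_rpow (uIcc_of_le hb ▸ hθ).1,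
    integral_rpow (Or.inl (by norm_num)), sqrt_eq_rpow]
  norm_num
  ring

lemma intervalIntegrable_div_sqrt {f : ℝ → ℝ} (hf : Continuous f) {b c : ℝ} (hb : 0 ≤ b)
    (hc : 0 ≤ c) : IntervalIntegrable (fun θ => f θ / √θ) volume b c := by
  have h (d : ℝ) (hd : 0 ≤ d) : IntervalIntegrable (fun θ => f θ / √θ) volume 0 d := by
    simpa only [mul_one_div] using
      (intervalIntegrable_one_div_sqrt hd).continuousOn_mul hf.continuousOn
  exact (h b hb).symm.trans (h c hc)

lemma exp_neg_le_one_div {x : ℝ} (hx : 0 < x) : exp (-x) ≤ 1 / x := by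
  rw [exp_neg, one_div]
  exact inv_anti₀ hx (by linarith [add_one_le_exp x])

lemma exp_neg_le_two_div_sq {x : ℝ} (hx : 0 < x) : exp (-x) ≤ 2 / x ^ 2 := by
  rw [exp_neg, ← one_div, div_le_div_iff₀ (exp_pos x) (by positivity)]
  nlinarith [quadratic_le_exp_of_nonneg hx.le]

lemma integral_exp_mul_sub {a : ℝ} (ha : a ≠ 0) (τ : ℝ) :
    ∫ θ in 0..τ, exp (a * (θ - τ)) = (1 - exp (-(a * τ))) / a := by
  simp only [mul_sub]
  rw [intervalIntegral.integral_comp_mul_sub (fun x => exp x) ha, integral_exp]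
  simp only [mul_zero, zero_sub, sub_self, exp_zero, smul_eq_mul]
  ring

lemma integral_sub_mul_exp_le {a c τ : ℝ} (ha : 0 < a) (hc : c ≤ τ) :
    ∫ θ in c..τ, (τ - θ) * exp (a * (θ - τ)) ≤ 1 / a ^ 2 := by
  have hderiv (θ : ℝ) : HasDerivAt (fun x => ((τ - x) / a + 1 / a ^ 2) * exp (a * (x - τ)))
      ((τ - θ) * exp (a * (θ - τ))) θ := by
    have hlin : HasDerivAt (fun x => (τ - x) / a + 1 / a ^ 2) (-1 / a) θ := by
      simpa using (((hasDerivAt_id θ).const_sub τ).div_const a).add_const (1 / a ^ 2)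
    have hexp : HasDerivAt (fun x => exp (a * (x - τ))) (exp (a * (θ - τ)) * a) θ := by
      simpa using (((hasDerivAt_id θ).sub_const τ).const_mul a).exp
    refine (hlin.mul hexp).congr_deriv ?_
    field_simp
    ring
  rw [intervalIntegral.integral_eq_sub_of_hasDerivAt (fun θ _ => hderiv θ)
    ((by fun_prop : Continuous _).intervalIntegrable _ _)]
  have : 0 ≤ ((τ - c) / a + 1 / a ^ 2) * exp (a * (c - τ)) := by
    have := sub_nonneg.2 hc
    positivity
  simp only [sub_self, zero_div, zero_add, mul_zero, exp_zero, mul_one]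
  linarith

lemma one_div_sqrt_sub_one_div_sqrt_le {θ τ : ℝ} (hθ : 0 < θ) (hθτ : θ ≤ τ) :
    1 / √θ - 1 / √τ ≤ (τ - θ) / (τ * √θ) := by
  have hs : 0 < √θ := sqrt_pos.2 hθ
  have hst : √θ ≤ √τ := sqrt_le_sqrt hθτ
  have ht : 0 < √τ := hs.trans_le hst
  rw [div_sub_div _ _ hs.ne' ht.ne', div_le_div_iff₀ (by positivity) (by nlinarith)]
  have key : 0 ≤ √θ ^ 2 * √τ * (√τ - √θ) := by have := sub_nonneg.2 hst; positivity
  linear_combination key + √θ ^ 2 * sq_sqrt (hθ.le.trans hθτ) - √θ * √τ * sq_sqrt hθ.le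

section

variable {a τ : ℝ}

lemma integral_exp_mul_div_sqrt_sub_eq (ha : a ≠ 0) (hτ : 0 ≤ τ) :
    (∫ θ in 0..τ, exp (a * (θ - τ)) / √θ) - 1 / (√τ * a) =
      (∫ θ in 0..τ, (exp (a * (θ - τ)) / √θ - exp (a * (θ - τ)) / √τ))
        - exp (-(a * τ)) / (√τ * a) := by
  rw [intervalIntegral.integral_sub (intervalIntegrable_div_sqrt (by fun_prop) le_rfl hτ)
      ((by fun_prop : Continuous _).intervalIntegrable _ _),
    intervalIntegral.integral_div, integral_exp_mul_sub ha]
  ring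

lemma intervalIntegrable_exp_mul_div_sqrt_sub {b c : ℝ} (hb : 0 ≤ b) (hc : 0 ≤ c) :
    IntervalIntegrable (fun θ => exp (a * (θ - τ)) / √θ - exp (a * (θ - τ)) / √τ)
      volume b c :=
  (intervalIntegrable_div_sqrt (by fun_prop) hb hc).sub
    ((by fun_prop : Continuous _).intervalIntegrable _ _)

lemma exp_mul_div_sqrt_sub_nonneg {θ : ℝ} (hθ : 0 < θ) (hθτ : θ ≤ τ) :
    0 ≤ exp (a * (θ - τ)) / √θ - exp (a * (θ - τ)) / √τ :=
  sub_nonneg.2 <| div_le_div_of_nonneg_left (exp_pos _).le (sqrt_pos.2 hθ) (sqrt_le_sqrt hθτ)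

lemma integral_exp_mul_div_sqrt_sub_nonneg (hτ : 0 ≤ τ) :
    0 ≤ ∫ θ in 0..τ, (exp (a * (θ - τ)) / √θ - exp (a * (θ - τ)) / √τ) := by
  -- the integrand is negative at `θ = 0`, where `1 / √0 = 0`
  rw [intervalIntegral.integral_of_le hτ]
  exact setIntegral_nonneg measurableSet_Ioc fun θ hθ => exp_mul_div_sqrt_sub_nonneg hθ.1 hθ.2

lemma integral_exp_mul_div_sqrt_sub_le_on_lower_half (ha : 0 < a) (hτ : 0 < τ) :
    ∫ θ in 0..τ / 2, (exp (a * (θ - τ)) / √θ - exp (a * (θ - τ)) / √τ)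
      ≤ 16 / (τ * √τ * a ^ 2) := by
  have hτ2 : 0 ≤ τ / 2 := by positivity
  have hexponent {θ : ℝ} (hθ : θ ≤ τ / 2) : a * (θ - τ) ≤ -(a * τ / 2) := by nlinarith
  calc _ ≤ ∫ θ in 0..τ / 2, exp (-(a * τ / 2)) * (1 / √θ) := by
        refine intervalIntegral.integral_mono_on hτ2
          (intervalIntegrable_exp_mul_div_sqrt_sub le_rfl hτ2)
          ((intervalIntegrable_one_div_sqrt hτ2).const_mul _) fun θ hθ => ?_
        calc _ ≤ exp (a * (θ - τ)) * (1 / √θ) := by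
              rw [mul_one_div]
              linarith [(by positivity : 0 ≤ exp (a * (θ - τ)) / √τ)]
          _ ≤ _ := by gcongr; exact hexponent hθ.2
    _ = exp (-(a * τ / 2)) * (2 * √(τ / 2)) := by
        rw [intervalIntegral.integral_const_mul, integral_one_div_sqrt hτ2]
    _ ≤ 2 / (a * τ / 2) ^ 2 * (2 * √τ) := by
        gcongr
        · exact exp_neg_le_two_div_sq (by positivity)
        · linarith
    _ = 16 / (τ * √τ * a ^ 2) := by
        have := sqrt_pos.2 hτ
        field_simp
        rw [sq_sqrt hτ.le]
        ring

lemma exp_mul_div_sqrt_sub_le_of_half_le (hτ : 0 < τ) {θ : ℝ} (hθ : τ / 2 ≤ θ)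
    (hθτ : θ ≤ τ) :
    exp (a * (θ - τ)) / √θ - exp (a * (θ - τ)) / √τ
      ≤ 2 / (τ * √τ) * ((τ - θ) * exp (a * (θ - τ))) := by
  have hθ0 : 0 < θ := by linarith
  have hsqrt : √τ / 2 ≤ √θ := by
    rw [le_sqrt (by positivity) hθ0.le, div_pow, sq_sqrt hτ.le]
    linarith
  have := sub_nonneg.2 hθτ
  have := sqrt_pos.2 hτ
  calc _ = exp (a * (θ - τ)) * (1 / √θ - 1 / √τ) := by ring
    _ ≤ exp (a * (θ - τ)) * ((τ - θ) / (τ * √θ)) := by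
        gcongr
        exact one_div_sqrt_sub_one_div_sqrt_le hθ0 hθτ
    _ ≤ exp (a * (θ - τ)) * ((τ - θ) / (τ * (√τ / 2))) := by gcongr
    _ = _ := by field_simp

lemma integral_exp_mul_div_sqrt_sub_le_on_upper_half (ha : 0 < a) (hτ : 0 < τ) :
    ∫ θ in τ / 2..τ, (exp (a * (θ - τ)) / √θ - exp (a * (θ - τ)) / √τ)
      ≤ 2 / (τ * √τ * a ^ 2) := by
  have hτ2 : 0 ≤ τ / 2 := by positivity
  calc _ ≤ ∫ θ in τ / 2..τ, 2 / (τ * √τ) * ((τ - θ) * exp (a * (θ - τ))) := by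
        refine intervalIntegral.integral_mono_on (by linarith)
          (intervalIntegrable_exp_mul_div_sqrt_sub hτ2 hτ.le)
          ((by fun_prop : Continuous _).intervalIntegrable _ _)
          fun θ hθ => exp_mul_div_sqrt_sub_le_of_half_le hτ hθ.1 hθ.2
    _ ≤ 2 / (τ * √τ) * (1 / a ^ 2) := by
        rw [intervalIntegral.integral_const_mul]
        gcongr
        exact integral_sub_mul_exp_le ha (by linarith)
    _ = 2 / (τ * √τ * a ^ 2) := by ring

theorem abs_integral_exp_mul_div_sqrt_sub_le (ha : 0 < a) (hτ : 0 < τ) :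
    |(∫ θ in 0..τ, exp (a * (θ - τ)) / √θ) - 1 / (√τ * a)| ≤ 19 / (τ * √τ * a ^ 2) := by
  have hτ2 : 0 ≤ τ / 2 := by positivity
  have hD : ∫ θ in 0..τ, (exp (a * (θ - τ)) / √θ - exp (a * (θ - τ)) / √τ)
      ≤ 16 / (τ * √τ * a ^ 2) + 2 / (τ * √τ * a ^ 2) := by
    rw [← intervalIntegral.integral_add_adjacent_intervals
      (intervalIntegrable_exp_mul_div_sqrt_sub le_rfl hτ2)
      (intervalIntegrable_exp_mul_div_sqrt_sub hτ2 hτ.le)]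
    exact add_le_add (integral_exp_mul_div_sqrt_sub_le_on_lower_half ha hτ)
      (integral_exp_mul_div_sqrt_sub_le_on_upper_half ha hτ)
  have hE : exp (-(a * τ)) / (√τ * a) ≤ 1 / (τ * √τ * a ^ 2) :=
    calc _ ≤ 1 / (a * τ) / (√τ * a) := by
          have := sqrt_pos.2 hτ
          gcongr
          exact exp_neg_le_one_div (by positivity)
      _ = 1 / (τ * √τ * a ^ 2) := by ring
  rw [integral_exp_mul_div_sqrt_sub_eq ha.ne' hτ.le]
  refine (abs_sub _ _).trans ?_
  rw [abs_of_nonneg (integral_exp_mul_div_sqrt_sub_nonneg hτ.le), abs_of_nonneg (by positivity)]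
  linarith [add_le_add hD hE,
    (by ring : 16 / (τ * √τ * a ^ 2) + 2 / (τ * √τ * a ^ 2) + 1 / (τ * √τ * a ^ 2)
      = 19 / (τ * √τ * a ^ 2))]

end

theorem integral_inv_sqrt_asymptotic (σ₀ τ : ℝ) (hσ₀ : 0 < σ₀) (hτ : 0 < τ) :
    ∃ C > (0 : ℝ), ∀ ξ : ℝ, 1 ≤ |ξ| →
      |(∫ θ in (0 : ℝ)..τ, Real.exp ((σ₀ * ξ / Real.sqrt 2) ^ 2 * (θ - τ)) / Real.sqrt θ) -
          1 / (Real.sqrt τ * (σ₀ * ξ / Real.sqrt 2) ^ 2)| ≤ C / ξ ^ 4 := by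
  refine ⟨76 / (τ * √τ * σ₀ ^ 4), by positivity, fun ξ hξ => ?_⟩
  have hξ : ξ ≠ 0 := abs_pos.1 (one_pos.trans_le hξ)
  have hΞ : (σ₀ * ξ / √2) ^ 2 = σ₀ ^ 2 * ξ ^ 2 / 2 := by
    rw [div_pow, mul_pow, sq_sqrt zero_le_two]
  calc _ ≤ 19 / (τ * √τ * ((σ₀ * ξ / √2) ^ 2) ^ 2) :=
        abs_integral_exp_mul_div_sqrt_sub_le (by positivity) hτ
    _ = 76 / (τ * √τ * σ₀ ^ 4) / ξ ^ 4 := by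
        rw [hΞ]
        field_simp
        ring
end

section
/- Let 0 < τ₁ < τ₂ and σ₀ > 0, and define d(ξ) = S·(∫_0^{τ₁} θ^{-1/2} e^{Ξ²(θ-τ₁)} dθ · ∫_0^{τ₂} θ^{1/2} e^{Ξ²(θ-τ₂)} dθ − ∫_0^{τ₁} θ^{1/2} e^{Ξ²(θ-τ₁)} dθ · ∫_0^{τ₂} θ^{-1/2} e^{Ξ²(θ-τ₂)} dθ), where Ξ = σ₀ξ/√2 and S > 0 is a constant. Then there exists C ≥ 1 such that C^{-1}(1+ξ²)^{-2} ≤ d(ξ) ≤ C(1+ξ²)^{-2} for all real ξ. -/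
/-!
Write `λ = Ξ²`, `𝒜(τ) = ∫₀^τ θ^{-1/2} e^{λ(θ-τ)} dθ` and `ℬ(τ) = ∫₀^τ θ^{1/2} e^{λ(θ-τ)} dθ`.
Splitting `[0, τ₂]` at `τ₁`, the contributions of `[0, τ₁]` to `𝒜(τ₁)ℬ(τ₂) - ℬ(τ₁)𝒜(τ₂)` cancel,
leaving `∫_{τ₁}^{τ₂} (𝒜(τ₁)√θ - ℬ(τ₁)/√θ) e^{λ(θ-τ₂)} dθ`. Since `ℬ(τ₁) ≤ τ₁ 𝒜(τ₁)`, the bracket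
lies between `𝒜(τ₁)(θ - τ₁)/√θ ≥ 0` and `𝒜(τ₁)√τ₂`. Against a weight bounded above and below,
the kernel `e^{λ(θ-b)}` integrates over an interval ending at `b` to `≍ 1/(1 + λ)`, and so does
`𝒜(τ₁)`. Hence the determinant is `≍ (1 + λ)⁻²`, and `1 + λ ≍ 1 + ξ²`.
-/

open MeasureTheory Real Set

section ExpKernel

variable {lam a b : ℝ}

lemma continuous_exp_mul_sub (lam b : ℝ) : Continuous fun θ => exp (lam * (θ - b)) := by
  fun_prop

lemma mul_integral_exp_mul_sub (lam a b : ℝ) :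
    lam * ∫ θ in a..b, exp (lam * (θ - b)) = 1 - exp (lam * (a - b)) := by
  simp only [mul_sub]
  rw [intervalIntegral.mul_integral_comp_mul_sub (f := exp), integral_exp, sub_self, exp_zero]

lemma exp_mul_sub_le_one (hlam : 0 ≤ lam) {θ : ℝ} (hθ : θ ≤ b) : exp (lam * (θ - b)) ≤ 1 :=
  exp_le_one_iff.mpr (mul_nonpos_of_nonneg_of_nonpos hlam (by linarith))

lemma one_add_mul_integral_exp_mul_sub_le (hlam : 0 ≤ lam) (hab : a ≤ b) :
    (1 + lam) * ∫ θ in a..b, exp (lam * (θ - b)) ≤ b - a + 1 := by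
  have hle : ∫ θ in a..b, exp (lam * (θ - b)) ≤ b - a := by
    simpa using intervalIntegral.integral_mono_on (μ := volume) (g := fun _ => 1) hab
      ((continuous_exp_mul_sub lam b).intervalIntegrable a b) intervalIntegrable_const
      fun θ hθ => exp_mul_sub_le_one hlam hθ.2
  rw [add_mul, one_mul, mul_integral_exp_mul_sub]
  linarith [exp_pos (lam * (a - b))]

-- `(1 + λ) ∫ₐᵇ e^{λ(θ-b)} dθ ≥ (b - a) t + 1 - t` with `t = e^{λ(a-b)} ∈ (0, 1]`.
lemma min_le_one_add_mul_integral_exp_mul_sub (hlam : 0 ≤ lam) (hab : a ≤ b) :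
    min (b - a) 1 ≤ (1 + lam) * ∫ θ in a..b, exp (lam * (θ - b)) := by
  have hge : (b - a) * exp (lam * (a - b)) ≤ ∫ θ in a..b, exp (lam * (θ - b)) := by
    simpa using intervalIntegral.integral_mono_on (μ := volume)
      (f := fun _ => exp (lam * (a - b))) hab intervalIntegrable_const
      ((continuous_exp_mul_sub lam b).intervalIntegrable a b)
      fun θ hθ => exp_le_exp.mpr (by nlinarith [hθ.1])
  have ht : exp (lam * (a - b)) ≤ 1 := exp_mul_sub_le_one hlam hab
  rw [add_mul, one_mul, mul_integral_exp_mul_sub]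
  rcases le_total (b - a) 1 with h | h
  · rw [min_eq_left h]; nlinarith [exp_pos (lam * (a - b))]
  · rw [min_eq_right h]; nlinarith [exp_pos (lam * (a - b))]

lemma one_add_mul_exp_neg_mul_le (hlam : 0 ≤ lam) {d : ℝ} (hd : 0 < d) :
    (1 + lam) * exp (-(lam * d)) ≤ 1 + d⁻¹ := by
  rw [exp_neg, ← div_eq_mul_inv, div_le_iff₀ (exp_pos _)]
  have hcancel : lam * d * d⁻¹ = lam := by field_simp
  calc 1 + lam ≤ (1 + d⁻¹) * (1 + lam * d) := by
        nlinarith [mul_nonneg hlam hd.le, inv_pos.mpr hd]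
    _ ≤ (1 + d⁻¹) * exp (lam * d) := by
        gcongr
        linarith [add_one_le_exp (lam * d)]

variable {w : ℝ → ℝ}

lemma IntervalIntegrable.mul_exp_mul_sub (hw : IntervalIntegrable w volume a b) (lam c : ℝ) :
    IntervalIntegrable (fun θ => w θ * exp (lam * (θ - c))) volume a b :=
  hw.mul_continuousOn (continuous_exp_mul_sub lam c).continuousOn

lemma one_add_mul_integral_mul_exp_le {M : ℝ} (hlam : 0 ≤ lam) (hab : a ≤ b)
    (hw : IntervalIntegrable w volume a b) (hwM : ∀ θ ∈ Ioo a b, w θ ≤ M) (hM : 0 ≤ M) :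
    (1 + lam) * ∫ θ in a..b, w θ * exp (lam * (θ - b)) ≤ M * (b - a + 1) := by
  have hle : ∫ θ in a..b, w θ * exp (lam * (θ - b)) ≤ M * ∫ θ in a..b, exp (lam * (θ - b)) := by
    rw [← intervalIntegral.integral_const_mul]
    exact intervalIntegral.integral_mono_on_of_le_Ioo hab (hw.mul_exp_mul_sub lam b)
      (((continuous_exp_mul_sub lam b).intervalIntegrable a b).const_mul M)
      fun θ hθ => mul_le_mul_of_nonneg_right (hwM θ hθ) (exp_pos _).le
  calc (1 + lam) * ∫ θ in a..b, w θ * exp (lam * (θ - b))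
      ≤ M * ((1 + lam) * ∫ θ in a..b, exp (lam * (θ - b))) := by
        rw [mul_left_comm]; exact mul_le_mul_of_nonneg_left hle (by linarith)
    _ ≤ M * (b - a + 1) := by
        gcongr; exact one_add_mul_integral_exp_mul_sub_le hlam hab

lemma le_one_add_mul_integral_mul_exp {m : ℝ} (hlam : 0 ≤ lam) (hab : a ≤ b)
    (hw : IntervalIntegrable w volume a b) (hmw : ∀ θ ∈ Ioo a b, m ≤ w θ) (hm : 0 ≤ m) :
    m * min (b - a) 1 ≤ (1 + lam) * ∫ θ in a..b, w θ * exp (lam * (θ - b)) := by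
  have hle : m * ∫ θ in a..b, exp (lam * (θ - b)) ≤ ∫ θ in a..b, w θ * exp (lam * (θ - b)) := by
    rw [← intervalIntegral.integral_const_mul]
    exact intervalIntegral.integral_mono_on_of_le_Ioo hab
      (((continuous_exp_mul_sub lam b).intervalIntegrable a b).const_mul m)
      (hw.mul_exp_mul_sub lam b)
      fun θ hθ => mul_le_mul_of_nonneg_right (hmw θ hθ) (exp_pos _).le
  calc m * min (b - a) 1 ≤ m * ((1 + lam) * ∫ θ in a..b, exp (lam * (θ - b))) := by
        gcongr; exact min_le_one_add_mul_integral_exp_mul_sub hlam hab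
    _ ≤ (1 + lam) * ∫ θ in a..b, w θ * exp (lam * (θ - b)) := by
        rw [mul_left_comm]; exact mul_le_mul_of_nonneg_left hle (by linarith)

-- On `[a, c]` the kernel is at most `e^{-λ(b-c)}`, and `(1 + λ) e^{-λ(b-c)}` stays bounded.
lemma one_add_mul_integral_mul_exp_le_of_lt {c : ℝ} (hlam : 0 ≤ lam) (hac : a ≤ c) (hcb : c < b)
    (hw : IntervalIntegrable w volume a c) (hw0 : ∀ θ ∈ Ioo a c, 0 ≤ w θ) :
    (1 + lam) * ∫ θ in a..c, w θ * exp (lam * (θ - b)) ≤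
      (1 + (b - c)⁻¹) * ∫ θ in a..c, w θ := by
  have hle : ∫ θ in a..c, w θ * exp (lam * (θ - b)) ≤
      (∫ θ in a..c, w θ) * exp (-(lam * (b - c))) := by
    rw [← intervalIntegral.integral_mul_const]
    refine intervalIntegral.integral_mono_on_of_le_Ioo hac (hw.mul_exp_mul_sub lam b)
      (hw.mul_const _)
      fun θ hθ => mul_le_mul_of_nonneg_left (exp_le_exp.mpr ?_) (hw0 θ hθ)
    nlinarith [hθ.2]
  have hint : 0 ≤ ∫ θ in a..c, w θ := by
    simpa using intervalIntegral.integral_mono_on_of_le_Ioo hac intervalIntegrable_const hw hw0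
  calc (1 + lam) * ∫ θ in a..c, w θ * exp (lam * (θ - b))
      ≤ (1 + lam) * exp (-(lam * (b - c))) * ∫ θ in a..c, w θ := by
        rw [mul_assoc, mul_comm (exp _)]; exact mul_le_mul_of_nonneg_left hle (by linarith)
    _ ≤ (1 + (b - c)⁻¹) * ∫ θ in a..c, w θ := by
        gcongr; exact one_add_mul_exp_neg_mul_le hlam (by linarith)

end ExpKernel

lemma intervalIntegrable_inv_sqrt {a b : ℝ} (ha : 0 ≤ a) (hb : 0 ≤ b) :
    IntervalIntegrable (fun θ => (√θ)⁻¹) volume a b := by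
  refine (intervalIntegral.intervalIntegrable_rpow' (r := -(1 / 2)) (by norm_num)).congr
    fun θ hθ => ?_
  have hθ₀ : 0 ≤ θ := (le_min ha hb).trans (uIoc_subset_uIcc hθ).1
  simp only [rpow_neg hθ₀, sqrt_eq_rpow]

lemma intervalIntegrable_mul_sqrt_sub {a b : ℝ} (A B : ℝ) (ha : 0 ≤ a) (hb : 0 ≤ b) :
    IntervalIntegrable (fun θ => A * √θ - B * (√θ)⁻¹) volume a b :=
  ((continuous_sqrt.intervalIntegrable a b).const_mul A).sub
    ((intervalIntegrable_inv_sqrt ha hb).const_mul B)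

lemma mul_sub_div_sqrt_le {A B τ₁ θ : ℝ} (hB : B ≤ τ₁ * A) (hθ : 0 < θ) :
    A * (θ - τ₁) / √θ ≤ A * √θ - B * (√θ)⁻¹ := by
  have hsplit : A * (θ - τ₁) / √θ = A * √θ - τ₁ * A * (√θ)⁻¹ := by
    field_simp
    rw [sq_sqrt hθ.le]
  rw [hsplit]
  gcongr

noncomputable def dampedIntegral (f : ℝ → ℝ) (lam τ : ℝ) : ℝ :=
  ∫ θ in (0 : ℝ)..τ, f θ * exp (lam * (θ - τ))

noncomputable def dampedDet (f g : ℝ → ℝ) (lam τ₁ τ₂ : ℝ) : ℝ :=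
  dampedIntegral f lam τ₁ * dampedIntegral g lam τ₂ -
    dampedIntegral g lam τ₁ * dampedIntegral f lam τ₂

section Damped

variable {f g : ℝ → ℝ} {lam τ τ₁ τ₂ : ℝ}

lemma dampedIntegral_eq_add (hf₁ : IntervalIntegrable f volume 0 τ₁)
    (hf₂ : IntervalIntegrable f volume τ₁ τ₂) :
    dampedIntegral f lam τ₂ = exp (lam * (τ₁ - τ₂)) * dampedIntegral f lam τ₁ +
      ∫ θ in τ₁..τ₂, f θ * exp (lam * (θ - τ₂)) := by
  rw [dampedIntegral, ← intervalIntegral.integral_add_adjacent_intervals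
    (hf₁.mul_exp_mul_sub lam τ₂) (hf₂.mul_exp_mul_sub lam τ₂), dampedIntegral,
    ← intervalIntegral.integral_const_mul]
  congr 1
  refine intervalIntegral.integral_congr fun θ _ => ?_
  simp only [mul_left_comm _ (f θ), ← exp_add]
  ring_nf

lemma dampedDet_eq_integral (hf₁ : IntervalIntegrable f volume 0 τ₁)
    (hf₂ : IntervalIntegrable f volume τ₁ τ₂) (hg₁ : IntervalIntegrable g volume 0 τ₁)
    (hg₂ : IntervalIntegrable g volume τ₁ τ₂) :
    dampedDet f g lam τ₁ τ₂ = ∫ θ in τ₁..τ₂,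
      (dampedIntegral f lam τ₁ * g θ - dampedIntegral g lam τ₁ * f θ) * exp (lam * (θ - τ₂)) := by
  simp only [sub_mul, mul_assoc]
  rw [dampedDet, dampedIntegral_eq_add hf₁ hf₂, dampedIntegral_eq_add hg₁ hg₂,
    intervalIntegral.integral_sub ((hg₂.mul_exp_mul_sub lam τ₂).const_mul _)
      ((hf₂.mul_exp_mul_sub lam τ₂).const_mul _),
    intervalIntegral.integral_const_mul, intervalIntegral.integral_const_mul]
  ring

lemma dampedIntegral_nonneg (hτ : 0 ≤ τ) (hf : ∀ θ ∈ Icc 0 τ, 0 ≤ f θ) :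
    0 ≤ dampedIntegral f lam τ :=
  intervalIntegral.integral_nonneg hτ fun θ hθ => mul_nonneg (hf θ hθ) (exp_pos _).le

local notation "𝒜" => dampedIntegral fun θ : ℝ => (√θ)⁻¹

local notation "ℬ" => dampedIntegral Real.sqrt

lemma dampedIntegral_sqrt_le (hτ : 0 ≤ τ) : ℬ lam τ ≤ τ * 𝒜 lam τ := by
  rw [dampedIntegral, dampedIntegral, ← intervalIntegral.integral_const_mul]
  refine intervalIntegral.integral_mono_on_of_le_Ioo hτ
    (continuous_sqrt.intervalIntegrable 0 τ |>.mul_exp_mul_sub lam τ)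
    ((intervalIntegrable_inv_sqrt le_rfl hτ |>.mul_exp_mul_sub lam τ).const_mul τ)
    fun θ hθ => ?_
  have hs : 0 < √θ := sqrt_pos.mpr hθ.1
  rw [← mul_assoc]
  refine mul_le_mul_of_nonneg_right ?_ (exp_pos _).le
  rw [← div_eq_mul_inv, le_div_iff₀ hs, mul_self_sqrt hθ.1.le]
  exact hθ.2.le

lemma le_one_add_mul_dampedIntegral_inv_sqrt (hlam : 0 ≤ lam) (hτ : 0 < τ) :
    (√τ)⁻¹ * min τ 1 ≤ (1 + lam) * 𝒜 lam τ := by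
  simpa [dampedIntegral] using le_one_add_mul_integral_mul_exp hlam hτ.le
    (intervalIntegrable_inv_sqrt le_rfl hτ.le)
    (fun θ hθ => inv_anti₀ (sqrt_pos.mpr hθ.1) (sqrt_le_sqrt hθ.2.le)) (by positivity)

lemma exists_one_add_mul_dampedIntegral_inv_sqrt_le (hτ : 0 < τ) :
    ∃ C, ∀ lam, 0 ≤ lam → (1 + lam) * 𝒜 lam τ ≤ C := by
  have hleft := intervalIntegrable_inv_sqrt le_rfl (by linarith : 0 ≤ τ / 2)
  have hright := intervalIntegrable_inv_sqrt (by linarith : 0 ≤ τ / 2) hτ.le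
  refine ⟨(1 + (τ - τ / 2)⁻¹) * (∫ θ in (0 : ℝ)..τ / 2, (√θ)⁻¹) +
    (√(τ / 2))⁻¹ * (τ - τ / 2 + 1), fun lam hlam => ?_⟩
  rw [dampedIntegral, ← intervalIntegral.integral_add_adjacent_intervals
    (hleft.mul_exp_mul_sub lam τ) (hright.mul_exp_mul_sub lam τ), mul_add]
  refine add_le_add ?_ ?_
  · exact one_add_mul_integral_mul_exp_le_of_lt hlam (by linarith) (by linarith) hleft
      fun θ _ => inv_nonneg.mpr (sqrt_nonneg θ)
  · exact one_add_mul_integral_mul_exp_le hlam (by linarith) hright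
      (fun θ hθ => inv_anti₀ (sqrt_pos.mpr (by linarith)) (sqrt_le_sqrt hθ.1.le)) (by positivity)

local notation "𝒟" => dampedDet (fun θ : ℝ => (√θ)⁻¹) Real.sqrt

lemma dampedDet_eq_integral_sqrt (h1 : 0 ≤ τ₁) (h12 : τ₁ ≤ τ₂) :
    𝒟 lam τ₁ τ₂ = ∫ θ in τ₁..τ₂, (𝒜 lam τ₁ * √θ - ℬ lam τ₁ * (√θ)⁻¹) * exp (lam * (θ - τ₂)) :=
  dampedDet_eq_integral (intervalIntegrable_inv_sqrt le_rfl h1)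
    (intervalIntegrable_inv_sqrt h1 (h1.trans h12)) (continuous_sqrt.intervalIntegrable _ _)
    (continuous_sqrt.intervalIntegrable _ _)

lemma one_add_mul_dampedDet_le (hlam : 0 ≤ lam) (h1 : 0 < τ₁) (h12 : τ₁ ≤ τ₂) :
    (1 + lam) * 𝒟 lam τ₁ τ₂ ≤ √τ₂ * (τ₂ - τ₁ + 1) * 𝒜 lam τ₁ := by
  have hA : 0 ≤ 𝒜 lam τ₁ :=
    dampedIntegral_nonneg h1.le fun θ _ => inv_nonneg.mpr (sqrt_nonneg θ)
  have hB : 0 ≤ ℬ lam τ₁ := dampedIntegral_nonneg h1.le fun θ _ => sqrt_nonneg θ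
  rw [dampedDet_eq_integral_sqrt h1.le h12, mul_right_comm, mul_comm (√τ₂)]
  refine one_add_mul_integral_mul_exp_le hlam h12
    (intervalIntegrable_mul_sqrt_sub _ _ h1.le (h1.le.trans h12))
    (fun θ hθ => ?_) (by positivity)
  have : 0 ≤ ℬ lam τ₁ * (√θ)⁻¹ := mul_nonneg hB (inv_nonneg.mpr (sqrt_nonneg θ))
  have : 𝒜 lam τ₁ * √θ ≤ 𝒜 lam τ₁ * √τ₂ := by gcongr; exact hθ.2.le
  linarith

lemma exists_mul_le_one_add_mul_dampedDet (h1 : 0 < τ₁) (h12 : τ₁ < τ₂) :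
    ∃ c > 0, ∀ lam, 0 ≤ lam → c * 𝒜 lam τ₁ ≤ (1 + lam) * 𝒟 lam τ₁ τ₂ := by
  obtain ⟨τ, hτ₁, hτ₂⟩ := exists_between h12
  refine ⟨(τ - τ₁) / √τ₂ * min (τ₂ - τ) 1,
    mul_pos (div_pos (by linarith) (sqrt_pos.mpr (by linarith))) (lt_min (by linarith) one_pos),
    fun lam hlam => ?_⟩
  have hA : 0 ≤ 𝒜 lam τ₁ :=
    dampedIntegral_nonneg h1.le fun θ _ => inv_nonneg.mpr (sqrt_nonneg θ)
  have hbracket (θ : ℝ) (hθ : τ₁ < θ) :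
      𝒜 lam τ₁ * (θ - τ₁) / √θ ≤ 𝒜 lam τ₁ * √θ - ℬ lam τ₁ * (√θ)⁻¹ :=
    mul_sub_div_sqrt_le (dampedIntegral_sqrt_le h1.le) (h1.trans hθ)
  have hhalf : (∫ θ in τ..τ₂, (𝒜 lam τ₁ * √θ - ℬ lam τ₁ * (√θ)⁻¹) * exp (lam * (θ - τ₂))) ≤
      𝒟 lam τ₁ τ₂ := by
    rw [dampedDet_eq_integral_sqrt h1.le h12.le]
    refine intervalIntegral.integral_mono_interval (by linarith) (by linarith) le_rfl
      ((ae_restrict_iff' measurableSet_Ioc).mpr (.of_forall fun θ hθ => ?_))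
      ((intervalIntegrable_mul_sqrt_sub _ _ h1.le (by linarith)).mul_exp_mul_sub lam τ₂)
    have : 0 ≤ 𝒜 lam τ₁ * (θ - τ₁) / √θ :=
      div_nonneg (mul_nonneg hA (by linarith [hθ.1])) (sqrt_nonneg θ)
    exact mul_nonneg (this.trans (hbracket θ hθ.1)) (exp_pos _).le
  have hlow := le_one_add_mul_integral_mul_exp (m := 𝒜 lam τ₁ * (τ - τ₁) / √τ₂) hlam
    (by linarith : τ ≤ τ₂) (intervalIntegrable_mul_sqrt_sub _ _ (by linarith) (by linarith))
    (fun θ hθ => (div_le_div₀ (mul_nonneg hA (by linarith [hθ.1]))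
      (mul_le_mul_of_nonneg_left (by linarith [hθ.1]) hA) (sqrt_pos.mpr (by linarith [hθ.1]))
      (sqrt_le_sqrt hθ.2.le)).trans (hbracket θ (by linarith [hθ.1])))
    (div_nonneg (mul_nonneg hA (by linarith)) (sqrt_nonneg _))
  calc (τ - τ₁) / √τ₂ * min (τ₂ - τ) 1 * 𝒜 lam τ₁
      = 𝒜 lam τ₁ * (τ - τ₁) / √τ₂ * min (τ₂ - τ) 1 := by ring
    _ ≤ _ := hlow
    _ ≤ (1 + lam) * 𝒟 lam τ₁ τ₂ := by gcongr

lemma exists_dampedDet_bounds (h1 : 0 < τ₁) (h12 : τ₁ < τ₂) :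
    ∃ c > 0, ∃ C, ∀ lam, 0 ≤ lam →
      c ≤ (1 + lam) ^ 2 * 𝒟 lam τ₁ τ₂ ∧ (1 + lam) ^ 2 * 𝒟 lam τ₁ τ₂ ≤ C := by
  obtain ⟨CA, hCA⟩ := exists_one_add_mul_dampedIntegral_inv_sqrt_le h1
  obtain ⟨k, hk, hlow⟩ := exists_mul_le_one_add_mul_dampedDet h1 h12
  refine ⟨k * ((√τ₁)⁻¹ * min τ₁ 1), by have := sqrt_pos.mpr h1; positivity,
    √τ₂ * (τ₂ - τ₁ + 1) * CA, fun lam hlam => ⟨?_, ?_⟩⟩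
  · calc k * ((√τ₁)⁻¹ * min τ₁ 1) ≤ k * ((1 + lam) * 𝒜 lam τ₁) :=
          mul_le_mul_of_nonneg_left (le_one_add_mul_dampedIntegral_inv_sqrt hlam h1) hk.le
      _ = (1 + lam) * (k * 𝒜 lam τ₁) := by ring
      _ ≤ (1 + lam) * ((1 + lam) * 𝒟 lam τ₁ τ₂) :=
          mul_le_mul_of_nonneg_left (hlow lam hlam) (by linarith)
      _ = (1 + lam) ^ 2 * 𝒟 lam τ₁ τ₂ := by ring
  · calc (1 + lam) ^ 2 * 𝒟 lam τ₁ τ₂ = (1 + lam) * ((1 + lam) * 𝒟 lam τ₁ τ₂) := by ring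
      _ ≤ (1 + lam) * (√τ₂ * (τ₂ - τ₁ + 1) * 𝒜 lam τ₁) :=
          mul_le_mul_of_nonneg_left (one_add_mul_dampedDet_le hlam h1 h12.le) (by linarith)
      _ = √τ₂ * (τ₂ - τ₁ + 1) * ((1 + lam) * 𝒜 lam τ₁) := by ring
      _ ≤ √τ₂ * (τ₂ - τ₁ + 1) * CA :=
          mul_le_mul_of_nonneg_left (hCA lam hlam) (by positivity)

end Damped

lemma exists_bounds_div_one_add_sq {d : ℝ → ℝ} {k c C : ℝ} (hk : 0 < k) (hc : 0 < c)
    (h : ∀ t, 0 ≤ t → c ≤ (1 + k * t) ^ 2 * d t ∧ (1 + k * t) ^ 2 * d t ≤ C) :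
    ∃ C' ≥ (1 : ℝ), ∀ t, 0 ≤ t → C'⁻¹ / (1 + t) ^ 2 ≤ d t ∧ d t ≤ C' / (1 + t) ^ 2 := by
  set m := min 1 k
  set M := max 1 k
  have hm : 0 < m := lt_min one_pos hk
  have hM : 0 < M := lt_max_of_lt_left one_pos
  refine ⟨max 1 (max (C / m ^ 2) (M ^ 2 / c)), le_max_left _ _, fun t ht => ?_⟩
  have hlo : m * (1 + t) ≤ 1 + k * t := by
    nlinarith [min_le_left 1 k, min_le_right 1 k]
  have hhi : 1 + k * t ≤ M * (1 + t) := by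
    nlinarith [le_max_left 1 k, le_max_right 1 k]
  obtain ⟨hcd, hdC⟩ := h t ht
  have hd : 0 < d t := pos_of_mul_pos_right (hc.trans_le hcd) (sq_nonneg _)
  constructor
  · rw [div_le_iff₀ (by positivity)]
    calc (max 1 (max (C / m ^ 2) (M ^ 2 / c)))⁻¹ ≤ (M ^ 2 / c)⁻¹ :=
          inv_anti₀ (by positivity) ((le_max_right _ _).trans (le_max_right _ _))
      _ = c / M ^ 2 := inv_div _ _
      _ ≤ (1 + k * t) ^ 2 * d t / M ^ 2 := by gcongr
      _ ≤ d t * (1 + t) ^ 2 := by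
          rw [div_le_iff₀ (by positivity)]
          nlinarith [pow_le_pow_left₀ (by positivity) hhi 2]
  · rw [le_div_iff₀ (by positivity)]
    calc d t * (1 + t) ^ 2 ≤ (1 + k * t) ^ 2 * d t / m ^ 2 := by
          rw [le_div_iff₀ (by positivity)]
          nlinarith [pow_le_pow_left₀ (by positivity) hlo 2]
      _ ≤ C / m ^ 2 := by gcongr
      _ ≤ max 1 (max (C / m ^ 2) (M ^ 2 / c)) := (le_max_left _ _).trans (le_max_right _ _)

lemma integral_exp_div_sqrt_eq_dampedIntegral (lam τ : ℝ) :
    ∫ θ in (0 : ℝ)..τ, exp (lam * (θ - τ)) / √θ = dampedIntegral (fun θ => (√θ)⁻¹) lam τ := by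
  simp only [dampedIntegral, div_eq_inv_mul]

theorem determinant_two_sided_bound (τ₁ τ₂ σ₀ S : ℝ) (hτ₁ : 0 < τ₁) (hτ : τ₁ < τ₂)
    (hσ₀ : 0 < σ₀) (hS : 0 < S) :
    ∃ C ≥ (1 : ℝ), ∀ ξ : ℝ,
      C⁻¹ / (1 + ξ ^ 2) ^ 2 ≤
        S * ((∫ θ in (0 : ℝ)..τ₁, Real.exp ((σ₀ * ξ / Real.sqrt 2) ^ 2 * (θ - τ₁)) / Real.sqrt θ) *
              (∫ θ in (0 : ℝ)..τ₂, Real.sqrt θ * Real.exp ((σ₀ * ξ / Real.sqrt 2) ^ 2 * (θ - τ₂))) -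
            (∫ θ in (0 : ℝ)..τ₁, Real.sqrt θ * Real.exp ((σ₀ * ξ / Real.sqrt 2) ^ 2 * (θ - τ₁))) *
              (∫ θ in (0 : ℝ)..τ₂, Real.exp ((σ₀ * ξ / Real.sqrt 2) ^ 2 * (θ - τ₂)) / Real.sqrt θ)) ∧
      S * ((∫ θ in (0 : ℝ)..τ₁, Real.exp ((σ₀ * ξ / Real.sqrt 2) ^ 2 * (θ - τ₁)) / Real.sqrt θ) *
              (∫ θ in (0 : ℝ)..τ₂, Real.sqrt θ * Real.exp ((σ₀ * ξ / Real.sqrt 2) ^ 2 * (θ - τ₂))) -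
            (∫ θ in (0 : ℝ)..τ₁, Real.sqrt θ * Real.exp ((σ₀ * ξ / Real.sqrt 2) ^ 2 * (θ - τ₁))) *
              (∫ θ in (0 : ℝ)..τ₂, Real.exp ((σ₀ * ξ / Real.sqrt 2) ^ 2 * (θ - τ₂)) / Real.sqrt θ)) ≤
        C / (1 + ξ ^ 2) ^ 2 := by
  obtain ⟨c, hc, C, hbounds⟩ := exists_dampedDet_bounds hτ₁ hτ
  obtain ⟨C', hC', hC'bounds⟩ := exists_bounds_div_one_add_sq
    (d := fun t => S * dampedDet (fun θ => (√θ)⁻¹) sqrt (σ₀ ^ 2 / 2 * t) τ₁ τ₂)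
    (by positivity : 0 < σ₀ ^ 2 / 2) (mul_pos hS hc) (C := S * C) fun t ht => by
      obtain ⟨hlo, hhi⟩ := hbounds (σ₀ ^ 2 / 2 * t) (by positivity)
      simp only [mul_left_comm _ S]
      exact ⟨by gcongr, by gcongr⟩
  refine ⟨C', hC', fun ξ => ?_⟩
  have hΞ : (σ₀ * ξ / √2) ^ 2 = σ₀ ^ 2 / 2 * ξ ^ 2 := by
    rw [div_pow, mul_pow, sq_sqrt zero_le_two]; ring
  simp only [hΞ, integral_exp_div_sqrt_eq_dampedIntegral]
  exact hC'bounds (ξ ^ 2) (sq_nonneg ξ)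
end

section
/- Let 0 < τ₁ < τ₂, σ₀ > 0, b > 0 and suppose ( (τ₁² + τ₂² + √(τ₁τ₂)(τ₁+τ₂)) / (τ₁τ₂(τ₂−τ₁)) )·(3b²/(2σ₀²)) < 1 and ( (√(τ₁/τ₂) + √(τ₂/τ₁) + 2)·b²/σ₀² + 2√(2π)(√τ₁+√τ₂)·b/σ₀ ) / (2(τ₂−τ₁)) < 1. Let A_{jk} (j=1,2, k=1,2) be bounded linear operators on L^∞(−b,b) with operator norms ‖A_{j1}‖ ≤ 3b²/(2τⱼσ₀²) and ‖A_{j2}‖ ≤ b²/(2σ₀²) + √(πτⱼ/2)·b/σ₀. If f₀, f₁ ∈ L^∞(−b,b) satisfy f₀ + τ₁f₁ + A₁₁f₀ + A₁₂f₁ = w₁ and f₀ + τ₂f₁ + A₂₁f₀ + A₂₂f₁ = w₂, then there is a constant C depending only on σ₀, τ₁, τ₂, b such that ‖f₀‖_∞ + ‖f₁‖_∞ ≤ C(‖w₁‖_∞ + ‖w₂‖_∞). In particular the solution (f₀,f₁) is unique. -/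
open MeasureTheory Real

private lemma norm_add6_le {E : Type*} [SeminormedAddGroup E] (a b c d e f : E) :
    ‖a + b + c + d + e + f‖ ≤ ‖a‖ + ‖b‖ + ‖c‖ + ‖d‖ + ‖e‖ + ‖f‖ := by
  calc ‖a + b + c + d + e + f‖ ≤ ‖a + b + c + d + e‖ + ‖f‖ := norm_add_le _ _
    _ ≤ ‖a + b + c + d‖ + ‖e‖ + ‖f‖ := by
        have := norm_add_le (a + b + c + d) e; linarith
    _ ≤ ‖a + b + c‖ + ‖d‖ + ‖e‖ + ‖f‖ := by
        have := norm_add_le (a + b + c) d; linarith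
    _ ≤ ‖a + b‖ + ‖c‖ + ‖d‖ + ‖e‖ + ‖f‖ := by
        have := norm_add_le (a + b) c; linarith
    _ ≤ ‖a‖ + ‖b‖ + ‖c‖ + ‖d‖ + ‖e‖ + ‖f‖ := by
        have := norm_add_le a b; linarith

set_option maxHeartbeats 2000000 in
theorem fredholm_system_stability (τ₁ τ₂ σ₀ b : ℝ) (hτ₁ : 0 < τ₁) (hτ : τ₁ < τ₂)
    (hσ₀ : 0 < σ₀) (hb : 0 < b)
    (hcond1 : (τ₁ ^ 2 + τ₂ ^ 2 + Real.sqrt (τ₁ * τ₂) * (τ₁ + τ₂)) / (τ₁ * τ₂ * (τ₂ - τ₁)) *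
        (3 * b ^ 2 / (2 * σ₀ ^ 2)) < 1)
    (hcond2 : ((Real.sqrt (τ₁ / τ₂) + Real.sqrt (τ₂ / τ₁) + 2) * b ^ 2 / σ₀ ^ 2 +
          2 * Real.sqrt (2 * Real.pi) * (Real.sqrt τ₁ + Real.sqrt τ₂) * b / σ₀) /
        (2 * (τ₂ - τ₁)) < 1) :
    ∃ C > (0 : ℝ),
      ∀ (A₁₁ A₁₂ A₂₁ A₂₂ :
          Lp ℝ ⊤ (volume.restrict (Set.Ioo (-b) b)) →L[ℝ]
            Lp ℝ ⊤ (volume.restrict (Set.Ioo (-b) b))),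
        ‖A₁₁‖ ≤ 3 * b ^ 2 / (2 * τ₁ * σ₀ ^ 2) →
        ‖A₂₁‖ ≤ 3 * b ^ 2 / (2 * τ₂ * σ₀ ^ 2) →
        ‖A₁₂‖ ≤ b ^ 2 / (2 * σ₀ ^ 2) + Real.sqrt (Real.pi * τ₁ / 2) * b / σ₀ →
        ‖A₂₂‖ ≤ b ^ 2 / (2 * σ₀ ^ 2) + Real.sqrt (Real.pi * τ₂ / 2) * b / σ₀ →
        ∀ f₀ f₁ w₁ w₂ : Lp ℝ ⊤ (volume.restrict (Set.Ioo (-b) b)),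
          f₀ + τ₁ • f₁ + A₁₁ f₀ + A₁₂ f₁ = w₁ →
          f₀ + τ₂ • f₁ + A₂₁ f₀ + A₂₂ f₁ = w₂ →
          ‖f₀‖ + ‖f₁‖ ≤ C * (‖w₁‖ + ‖w₂‖) := by
  have hτ₂ : 0 < τ₂ := hτ₁.trans hτ
  have hd : 0 < τ₂ - τ₁ := sub_pos.mpr hτ
  set u := Real.sqrt τ₁ with hu
  set v := Real.sqrt τ₂ with hv
  have hu0 : 0 < u := Real.sqrt_pos.mpr hτ₁
  have hv0 : 0 < v := Real.sqrt_pos.mpr hτ₂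
  have hu2 : u ^ 2 = τ₁ := Real.sq_sqrt hτ₁.le
  have hv2 : v ^ 2 = τ₂ := Real.sq_sqrt hτ₂.le
  set q := Real.sqrt (Real.pi / 2) with hq
  have hq0 : 0 < q := Real.sqrt_pos.mpr (by positivity)
  set s := u * v with hsdef
  have hs0 : 0 < s := mul_pos hu0 hv0
  have hs : Real.sqrt (τ₁ * τ₂) = s := Real.sqrt_mul hτ₁.le τ₂
  have h12 : Real.sqrt (τ₁ / τ₂) = u / v := Real.sqrt_div hτ₁.le τ₂
  have h21 : Real.sqrt (τ₂ / τ₁) = v / u := Real.sqrt_div hτ₂.le τ₁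
  have hpt1 : Real.sqrt (Real.pi * τ₁ / 2) = q * u := by
    rw [show Real.pi * τ₁ / 2 = (Real.pi / 2) * τ₁ by ring, Real.sqrt_mul (by positivity)]
  have hpt2 : Real.sqrt (Real.pi * τ₂ / 2) = q * v := by
    rw [show Real.pi * τ₂ / 2 = (Real.pi / 2) * τ₂ by ring, Real.sqrt_mul (by positivity)]
  have h2pi : Real.sqrt (2 * Real.pi) = 2 * q := by
    rw [show (2 : ℝ) * Real.pi = 2 ^ 2 * (Real.pi / 2) by ring,
      Real.sqrt_mul (by positivity), Real.sqrt_sq (by norm_num)]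
  -- abbreviations for the operator norm bounds
  set a₁ := 3 * b ^ 2 / (2 * τ₁ * σ₀ ^ 2) with ha₁
  set a₂ := 3 * b ^ 2 / (2 * τ₂ * σ₀ ^ 2) with ha₂
  set β₁ := b ^ 2 / (2 * σ₀ ^ 2) + Real.sqrt (Real.pi * τ₁ / 2) * b / σ₀ with hβ₁
  set β₂ := b ^ 2 / (2 * σ₀ ^ 2) + Real.sqrt (Real.pi * τ₂ / 2) * b / σ₀ with hβ₂
  -- condition 1 rephrased
  have c1 : τ₂ * a₁ + τ₁ * a₂ + s * (a₁ + a₂) < τ₂ - τ₁ := by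
    rw [hs, div_mul_eq_mul_div, div_lt_one (by positivity)] at hcond1
    have e1 : (τ₂ * a₁ + τ₁ * a₂ + s * (a₁ + a₂)) * (τ₁ * τ₂) =
        (τ₁ ^ 2 + τ₂ ^ 2 + s * (τ₁ + τ₂)) * (3 * b ^ 2 / (2 * σ₀ ^ 2)) := by
      rw [ha₁, ha₂]; field_simp; ring
    have h12' : (τ₂ * a₁ + τ₁ * a₂ + s * (a₁ + a₂)) * (τ₁ * τ₂) < (τ₂ - τ₁) * (τ₁ * τ₂) := by
      rw [e1]; linarith [hcond1]
    exact lt_of_mul_lt_mul_right h12' (by positivity)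
  -- condition 2 rephrased
  have c2 : τ₂ * β₁ + τ₁ * β₂ + s * (β₁ + β₂) < s * (τ₂ - τ₁) := by
    rw [h12, h21, h2pi, div_lt_one (by positivity)] at hcond2
    have e2 : (τ₂ * β₁ + τ₁ * β₂ + s * (β₁ + β₂)) * 2 =
        ((u / v + v / u + 2) * b ^ 2 / σ₀ ^ 2 + 2 * (2 * q) * (u + v) * b / σ₀) * (u * v) := by
      rw [hβ₁, hβ₂, hpt1, hpt2, ← hu2, ← hv2, hsdef]; field_simp; ring
    have h22' : (τ₂ * β₁ + τ₁ * β₂ + s * (β₁ + β₂)) * 2 < (s * (τ₂ - τ₁)) * 2 := by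
      rw [e2]
      calc ((u / v + v / u + 2) * b ^ 2 / σ₀ ^ 2 + 2 * (2 * q) * (u + v) * b / σ₀) * (u * v)
          < (2 * (τ₂ - τ₁)) * (u * v) := by
            exact mul_lt_mul_of_pos_right hcond2 (by positivity)
        _ = (s * (τ₂ - τ₁)) * 2 := by rw [hsdef]; ring
    linarith
  set ε := min ((τ₂ - τ₁) - (τ₂ * a₁ + τ₁ * a₂ + s * (a₁ + a₂)))
      ((s * (τ₂ - τ₁)) - (τ₂ * β₁ + τ₁ * β₂ + s * (β₁ + β₂))) with hε
  have hε0 : 0 < ε := lt_min (by linarith) (by linarith)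
  refine ⟨(τ₂ + s) / ε, by positivity, ?_⟩
  intro A₁₁ A₁₂ A₂₁ A₂₂ hA11 hA21 hA12 hA22 f₀ f₁ w₁ w₂ h1 h2
  have hb11 : ‖A₁₁ f₀‖ ≤ a₁ * ‖f₀‖ :=
    (A₁₁.le_opNorm f₀).trans (mul_le_mul_of_nonneg_right hA11 (norm_nonneg _))
  have hb21 : ‖A₂₁ f₀‖ ≤ a₂ * ‖f₀‖ :=
    (A₂₁.le_opNorm f₀).trans (mul_le_mul_of_nonneg_right hA21 (norm_nonneg _))
  have hb12 : ‖A₁₂ f₁‖ ≤ β₁ * ‖f₁‖ :=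
    (A₁₂.le_opNorm f₁).trans (mul_le_mul_of_nonneg_right hA12 (norm_nonneg _))
  have hb22 : ‖A₂₂ f₁‖ ≤ β₂ * ‖f₁‖ :=
    (A₂₂.le_opNorm f₁).trans (mul_le_mul_of_nonneg_right hA22 (norm_nonneg _))
  have key1 : (τ₂ - τ₁) • f₀ = τ₂ • w₁ + (-τ₁) • w₂ + (-τ₂) • (A₁₁ f₀) + τ₁ • (A₂₁ f₀) +
      (-τ₂) • (A₁₂ f₁) + τ₁ • (A₂₂ f₁) := by
    rw [← h1, ← h2]; module
  have key2 : (τ₂ - τ₁) • f₁ = (-1 : ℝ) • w₁ + (1 : ℝ) • w₂ + (1 : ℝ) • (A₁₁ f₀) +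
      (-1 : ℝ) • (A₂₁ f₀) + (1 : ℝ) • (A₁₂ f₁) + (-1 : ℝ) • (A₂₂ f₁) := by
    rw [← h1, ← h2]; module
  have n1 : (τ₂ - τ₁) * ‖f₀‖ ≤ τ₂ * ‖w₁‖ + τ₁ * ‖w₂‖ + τ₂ * (a₁ * ‖f₀‖) + τ₁ * (a₂ * ‖f₀‖) +
      τ₂ * (β₁ * ‖f₁‖) + τ₁ * (β₂ * ‖f₁‖) := by
    have h := norm_add6_le (τ₂ • w₁) ((-τ₁) • w₂) ((-τ₂) • (A₁₁ f₀)) (τ₁ • (A₂₁ f₀))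
      ((-τ₂) • (A₁₂ f₁)) (τ₁ • (A₂₂ f₁))
    rw [← key1] at h
    simp only [norm_smul, Real.norm_eq_abs, abs_neg, abs_of_pos hτ₁, abs_of_pos hτ₂,
      abs_of_pos hd] at h
    linarith [mul_le_mul_of_nonneg_left hb11 hτ₂.le, mul_le_mul_of_nonneg_left hb21 hτ₁.le,
      mul_le_mul_of_nonneg_left hb12 hτ₂.le, mul_le_mul_of_nonneg_left hb22 hτ₁.le]
  have n2 : (τ₂ - τ₁) * ‖f₁‖ ≤ ‖w₁‖ + ‖w₂‖ + a₁ * ‖f₀‖ + a₂ * ‖f₀‖ + β₁ * ‖f₁‖ + β₂ * ‖f₁‖ := by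
    have h := norm_add6_le ((-1 : ℝ) • w₁) ((1 : ℝ) • w₂) ((1 : ℝ) • (A₁₁ f₀))
      ((-1 : ℝ) • (A₂₁ f₀)) ((1 : ℝ) • (A₁₂ f₁)) ((-1 : ℝ) • (A₂₂ f₁))
    rw [← key2] at h
    simp only [norm_smul, Real.norm_eq_abs, abs_neg, abs_one, abs_of_pos hd, one_mul] at h
    linarith
  have n2s : s * ((τ₂ - τ₁) * ‖f₁‖) ≤ s * (‖w₁‖ + ‖w₂‖ + a₁ * ‖f₀‖ + a₂ * ‖f₀‖ +
      β₁ * ‖f₁‖ + β₂ * ‖f₁‖) := mul_le_mul_of_nonneg_left n2 hs0.le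
  have hεle1 : ε ≤ (τ₂ - τ₁) - (τ₂ * a₁ + τ₁ * a₂ + s * (a₁ + a₂)) := min_le_left _ _
  have hεle2 : ε ≤ (s * (τ₂ - τ₁)) - (τ₂ * β₁ + τ₁ * β₂ + s * (β₁ + β₂)) := min_le_right _ _
  have hx := mul_le_mul_of_nonneg_right hεle1 (norm_nonneg f₀)
  have hy := mul_le_mul_of_nonneg_right hεle2 (norm_nonneg f₁)
  rw [div_mul_eq_mul_div, le_div_iff₀ hε0]
  linarith [n1, n2s, hx, hy, mul_nonneg hd.le (norm_nonneg w₂)]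
end
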